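/- For every γ ∈ (0,1), σ ≥ 0, θ ∈ (π/2, π), κ > 0 and T > 0 there exists a constant c > 0 such that for every t ∈ (0, T] and every real λ ≥ 0, the contour integral E(t) = (1/(2πi)) ∫_{Γ_{θ,κ}} e^{zt}·((σ+z)^γ + λ)^{−1} dz (understood as the sum of the parametrized integrals over the two rays z = r e^{±iθ}, r ∈ [κ, ∞), and the arc z = κ e^{iψ}, ψ ∈ [−θ, θ], with orientation of increasing imaginary part) satisfies |E(t)| ≤ c·t^{γ−1}. -/

import Mathlib

/-!
For `|arg z| ≤ θ` the point `σ + z` stays in the same sector and has modulus at least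
`sin θ · |z|`; hence `(σ + z)^γ` lies in the sector `|arg| ≤ γθ < π`, and adding `λ ≥ 0` to a
point of that sector shrinks its modulus by at most the factor `sin (γθ)`. This gives
`|((σ + z)^γ + λ)⁻¹| ≤ C |z|^(-γ)` uniformly in `λ`. On the rays `|e^{zt}| = e^{-r |cos θ| t}`,
and `∫ r^(-γ) e^{-ar} dr = Γ(1 - γ) a^(γ - 1)` produces the factor `t^(γ - 1)`; the arc only
contributes a bounded term, which is `O(t^(γ - 1))` on `(0, T]` because `γ < 1`.
-/

open Real MeasureTheory

/-- Integrand e^{zt}((σ+z)^γ + λ)^{−1} of the sectorial representation of E(t). -/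
noncomputable def resKer (γ σ lam t : ℝ) (z : ℂ) : ℂ :=
  Complex.exp (z * (t : ℂ)) * (((σ : ℂ) + z) ^ (γ : ℂ) + (lam : ℂ))⁻¹

/-- The contour integral E(t) over the full sectorial contour Γ_{θ,κ}, written as the
sum of the parametrized integrals over the two rays z = r e^{±iθ}, r ∈ [κ,∞), and the
arc z = κ e^{iψ}, ψ ∈ [−θ,θ], oriented with increasing imaginary part. -/
noncomputable def Eop (γ σ lam θ κ t : ℝ) : ℂ :=
  (1 / (2 * (π : ℂ) * Complex.I)) *
    ((∫ r in Set.Ioi κ,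
        (resKer γ σ lam t ((r : ℂ) * Complex.exp ((θ : ℂ) * Complex.I)) *
            Complex.exp ((θ : ℂ) * Complex.I)
          - resKer γ σ lam t ((r : ℂ) * Complex.exp (-(θ : ℂ) * Complex.I)) *
            Complex.exp (-(θ : ℂ) * Complex.I)))
      + ∫ ψ in (-θ)..θ,
          resKer γ σ lam t ((κ : ℂ) * Complex.exp ((ψ : ℂ) * Complex.I)) *
            (Complex.I * (κ : ℂ) * Complex.exp ((ψ : ℂ) * Complex.I)))

section Sector

open Complex

lemma sq_norm_eq_re_sq_add_im_sq (w : ℂ) : ‖w‖ ^ 2 = w.re ^ 2 + w.im ^ 2 := by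
  rw [Complex.sq_norm, normSq_apply]; ring

variable {α : ℝ} {w : ℂ}

lemma sin_sq_mul_re_sq_le_cos_sq_mul_im_sq (hw : Real.cos α * ‖w‖ ≤ w.re) (hre : w.re < 0) :
    Real.sin α ^ 2 * w.re ^ 2 ≤ Real.cos α ^ 2 * w.im ^ 2 := by
  have hre_sq : w.re ^ 2 ≤ (Real.cos α * ‖w‖) ^ 2 := by
    simpa using sq_le_sq' (b := -(Real.cos α * ‖w‖)) (by linarith) (by linarith)
  rw [mul_pow, sq_norm_eq_re_sq_add_im_sq] at hre_sq
  nlinarith [Real.sin_sq_add_cos_sq α]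

lemma sin_mul_norm_le_norm_add_ofReal (hw : Real.cos α * ‖w‖ ≤ w.re) {l : ℝ} (hl : 0 ≤ l) :
    Real.sin α * ‖w‖ ≤ ‖w + l‖ := by
  rcases le_or_gt 0 w.re with hre | hre
  · have hle : ‖w‖ ≤ ‖w + l‖ := by
      rw [← sq_le_sq₀ (norm_nonneg _) (norm_nonneg _), sq_norm_eq_re_sq_add_im_sq,
        sq_norm_eq_re_sq_add_im_sq]
      simp only [add_re, ofReal_re, add_im, ofReal_im, add_zero]
      nlinarith
    nlinarith [Real.sin_le_one α, norm_nonneg w]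
  · have him : Real.sin α * ‖w‖ ≤ |w.im| := by
      refine le_of_sq_le_sq ?_ (abs_nonneg _)
      have := sin_sq_mul_re_sq_le_cos_sq_mul_im_sq hw hre
      rw [sq_abs, mul_pow, sq_norm_eq_re_sq_add_im_sq]
      nlinarith [Real.sin_sq_add_cos_sq α]
    exact him.trans (by simpa using abs_im_le_norm (w + l))

lemma cos_mul_norm_le_re_ofReal_add {σ : ℝ} (hσ : 0 ≤ σ) (hw : Real.cos α * ‖w‖ ≤ w.re) :
    Real.cos α * ‖σ + w‖ ≤ (σ + w).re := by
  rw [add_re, ofReal_re]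
  rcases le_or_gt 0 (Real.cos α) with hcos | hcos
  · calc Real.cos α * ‖σ + w‖ ≤ Real.cos α * (σ + ‖w‖) := by
          gcongr
          simpa [abs_of_nonneg hσ] using norm_add_le (σ : ℂ) w
      _ ≤ σ + w.re := by nlinarith [Real.cos_le_one α]
  rcases le_or_gt 0 (σ + w.re) with hpos | hneg
  · nlinarith [norm_nonneg ((σ : ℂ) + w)]
  -- moving the point towards the imaginary axis only shrinks the ratio |Re| / |Im|
  have hw' := sin_sq_mul_re_sq_le_cos_sq_mul_im_sq hw (by linarith)
  have hshift : (σ + w.re) ^ 2 ≤ w.re ^ 2 := by nlinarith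
  have hsq : (σ + w.re) ^ 2 ≤ (Real.cos α * ‖σ + w‖) ^ 2 := by
    rw [mul_pow, sq_norm_eq_re_sq_add_im_sq]
    simp only [add_re, ofReal_re, add_im, ofReal_im, zero_add]
    nlinarith [Real.sin_sq_add_cos_sq α, sq_nonneg (Real.sin α)]
  have hnonpos : Real.cos α * ‖σ + w‖ ≤ 0 := mul_nonpos_of_nonpos_of_nonneg hcos.le (norm_nonneg _)
  have habs := sq_le_sq.1 hsq
  rw [abs_of_neg hneg, abs_of_nonpos hnonpos] at habs
  linarith

lemma abs_arg_le_of_cos_mul_norm_le_re (hα : 0 ≤ α) (hw : Real.cos α * ‖w‖ ≤ w.re) :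
    |arg w| ≤ α := by
  rcases eq_or_ne w 0 with rfl | hw0
  · simpa using hα
  by_contra! h
  have hcos := Real.cos_lt_cos_of_nonneg_of_le_pi hα (abs_arg_le_pi w) h
  rw [Real.cos_abs, cos_arg hw0, div_lt_iff₀ (norm_pos_iff.mpr hw0)] at hcos
  linarith

lemma cos_mul_norm_cpow_le_re_cpow {γ : ℝ} (hγ : 0 ≤ γ) (hα : 0 ≤ α) (hγα : γ * α ≤ π)
    (hw : Real.cos α * ‖w‖ ≤ w.re) :
    Real.cos (γ * α) * ‖w ^ (γ : ℂ)‖ ≤ (w ^ (γ : ℂ)).re := by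
  rw [norm_cpow_real, cpow_ofReal_re, mul_comm]
  gcongr
  rw [← Real.cos_abs (arg w * γ)]
  refine Real.cos_le_cos_of_nonneg_of_le_pi (abs_nonneg _) hγα ?_
  rw [abs_mul, abs_of_nonneg hγ, mul_comm]
  gcongr
  exact abs_arg_le_of_cos_mul_norm_le_re hα hw

end Sector

noncomputable def sectorResolventConst (γ θ : ℝ) : ℝ := (sin θ ^ γ * sin (γ * θ))⁻¹

lemma sectorResolventConst_pos {γ θ : ℝ} (hγ0 : 0 < γ) (hγ1 : γ ≤ 1) (hθ0 : 0 < θ)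
    (hθπ : θ < π) : 0 < sectorResolventConst γ θ := by
  have hγθ : γ * θ < π := by nlinarith
  have := sin_pos_of_pos_of_lt_pi hθ0 hθπ
  have := sin_pos_of_pos_of_lt_pi (mul_pos hγ0 hθ0) hγθ
  unfold sectorResolventConst
  positivity

lemma norm_inv_cpow_add_ofReal_le {γ θ σ l : ℝ} (hγ0 : 0 < γ) (hγ1 : γ ≤ 1) (hθ0 : 0 < θ)
    (hθπ : θ < π) (hσ : 0 ≤ σ) (hl : 0 ≤ l) {z : ℂ} (hz : z ≠ 0)
    (hsec : cos θ * ‖z‖ ≤ z.re) :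
    ‖(((σ : ℂ) + z) ^ (γ : ℂ) + l)⁻¹‖ ≤ sectorResolventConst γ θ * ‖z‖ ^ (-γ) := by
  have hsin : 0 < sin θ := sin_pos_of_pos_of_lt_pi hθ0 hθπ
  have hγθ : γ * θ ≤ π := by nlinarith
  have hsinγθ : 0 < sin (γ * θ) :=
    sin_pos_of_pos_of_lt_pi (mul_pos hγ0 hθ0) (by nlinarith)
  have hz_pos : 0 < ‖z‖ := norm_pos_iff.mpr hz
  have hshift : sin θ * ‖z‖ ≤ ‖(σ : ℂ) + z‖ := by
    simpa [add_comm] using sin_mul_norm_le_norm_add_ofReal hsec hσ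
  have hpow_sec := cos_mul_norm_cpow_le_re_cpow hγ0.le hθ0.le hγθ
    (cos_mul_norm_le_re_ofReal_add hσ hsec)
  have hlower : sin θ ^ γ * sin (γ * θ) * ‖z‖ ^ γ ≤ ‖((σ : ℂ) + z) ^ (γ : ℂ) + l‖ :=
    calc sin θ ^ γ * sin (γ * θ) * ‖z‖ ^ γ = sin (γ * θ) * (sin θ * ‖z‖) ^ γ := by
          rw [mul_rpow hsin.le hz_pos.le]; ring
      _ ≤ sin (γ * θ) * ‖((σ : ℂ) + z) ^ (γ : ℂ)‖ := by
          rw [Complex.norm_cpow_real]; gcongr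
      _ ≤ _ := sin_mul_norm_le_norm_add_ofReal hpow_sec hl
  rw [norm_inv, sectorResolventConst, rpow_neg hz_pos.le, ← mul_inv]
  exact inv_anti₀ (by positivity) hlower

lemma norm_resKer_ofReal_mul_exp_le {γ σ θ lam : ℝ} (t : ℝ) (hγ0 : 0 < γ) (hγ1 : γ ≤ 1)
    (hθ0 : 0 < θ) (hθπ : θ < π) (hσ : 0 ≤ σ) (hlam : 0 ≤ lam) {r ψ : ℝ} (hr : 0 < r)
    (hψ : |ψ| ≤ θ) :
    ‖resKer γ σ lam t (r * Complex.exp (ψ * Complex.I))‖ ≤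
      sectorResolventConst γ θ * (r ^ (-γ) * exp (r * cos ψ * t)) := by
  set z : ℂ := r * Complex.exp (ψ * Complex.I)
  have hz_norm : ‖z‖ = r := by simp [z, abs_of_pos hr]
  have hz_re : z.re = r * cos ψ := by simp [z, Complex.exp_ofReal_mul_I_re]
  have hsec : cos θ * ‖z‖ ≤ z.re := by
    rw [hz_norm, hz_re, mul_comm]
    gcongr
    rw [← cos_abs ψ]
    exact cos_le_cos_of_nonneg_of_le_pi (abs_nonneg ψ) hθπ.le hψ
  have hz : z ≠ 0 := norm_pos_iff.mp (hz_norm ▸ hr)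
  have hexp : ‖Complex.exp (z * t)‖ = exp (r * cos ψ * t) := by
    rw [Complex.norm_exp, Complex.re_mul_ofReal, hz_re]
  have hinv := norm_inv_cpow_add_ofReal_le hγ0 hγ1 hθ0 hθπ hσ hlam hz hsec
  rw [hz_norm] at hinv
  rw [resKer, norm_mul, hexp]
  exact (mul_le_mul_of_nonneg_left hinv (exp_pos _).le).trans_eq (by ring)

noncomputable def rayIntegrand (γ σ lam θ t r : ℝ) : ℂ :=
  resKer γ σ lam t ((r : ℂ) * Complex.exp ((θ : ℂ) * Complex.I)) *
      Complex.exp ((θ : ℂ) * Complex.I)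
    - resKer γ σ lam t ((r : ℂ) * Complex.exp (-(θ : ℂ) * Complex.I)) *
      Complex.exp (-(θ : ℂ) * Complex.I)

noncomputable def rayIntegral (γ σ lam θ κ t : ℝ) : ℂ :=
  ∫ r in Set.Ioi κ, rayIntegrand γ σ lam θ t r

noncomputable def arcIntegral (γ σ lam θ κ t : ℝ) : ℂ :=
  ∫ ψ in (-θ)..θ,
    resKer γ σ lam t ((κ : ℂ) * Complex.exp ((ψ : ℂ) * Complex.I)) *
      (Complex.I * (κ : ℂ) * Complex.exp ((ψ : ℂ) * Complex.I))

lemma Eop_eq (γ σ lam θ κ t : ℝ) :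
    Eop γ σ lam θ κ t =
      1 / (2 * (π : ℂ) * Complex.I) * (rayIntegral γ σ lam θ κ t + arcIntegral γ σ lam θ κ t) :=
  rfl

lemma integrableOn_rpow_mul_exp_neg_mul_Ioi {s a : ℝ} (hs : -1 < s) (ha : 0 < a) :
    IntegrableOn (fun r : ℝ => r ^ s * exp (-(a * r))) (Set.Ioi 0) := by
  simpa [rpow_one] using integrableOn_rpow_mul_exp_neg_mul_rpow hs one_pos ha

lemma norm_rayIntegral_le {γ σ θ κ t lam : ℝ} (hγ0 : 0 < γ) (hγ1 : γ < 1) (hσ : 0 ≤ σ)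
    (hθ1 : π / 2 < θ) (hθ2 : θ < π) (hκ : 0 ≤ κ) (ht : 0 < t) (hlam : 0 ≤ lam) :
    ‖rayIntegral γ σ lam θ κ t‖ ≤
      2 * sectorResolventConst γ θ * (Gamma (1 - γ) * (-cos θ) ^ (γ - 1)) * t ^ (γ - 1) := by
  have hθ0 : 0 < θ := by linarith [pi_pos]
  have hcos : cos θ < 0 := cos_neg_of_pi_div_two_lt_of_lt hθ1 (by linarith)
  set C := sectorResolventConst γ θ
  set a := -cos θ * t
  have ha : 0 < a := mul_pos (neg_pos.mpr hcos) ht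
  have hint := integrableOn_rpow_mul_exp_neg_mul_Ioi (s := -γ) (by linarith) ha
  have hpoint : ∀ r ∈ Set.Ioi κ, ∀ ψ, |ψ| = θ →
      ‖resKer γ σ lam t (r * Complex.exp (ψ * Complex.I)) * Complex.exp (ψ * Complex.I)‖ ≤
        C * (r ^ (-γ) * exp (-(a * r))) := by
    intro r hr ψ hψ
    have hbound := norm_resKer_ofReal_mul_exp_le t hγ0 hγ1.le hθ0 hθ2 hσ hlam
      (hκ.trans_lt hr) hψ.le
    rw [norm_mul, Complex.norm_exp_ofReal_mul_I, mul_one]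
    rwa [← cos_abs, hψ, show r * cos θ * t = -(a * r) by ring] at hbound
  have hbound : ∀ r ∈ Set.Ioi κ,
      ‖rayIntegrand γ σ lam θ t r‖ ≤ 2 * C * (r ^ (-γ) * exp (-(a * r))) := by
    intro r hr
    have hplus := hpoint r hr θ (abs_of_pos hθ0)
    have hminus := hpoint r hr (-θ) (by rw [abs_neg, abs_of_pos hθ0])
    push_cast at hminus
    exact (norm_sub_le _ _).trans (by linarith)
  calc ‖rayIntegral γ σ lam θ κ t‖
      ≤ ∫ r in Set.Ioi κ, 2 * C * (r ^ (-γ) * exp (-(a * r))) :=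
        norm_integral_le_of_norm_le ((hint.mono_set (Set.Ioi_subset_Ioi hκ)).const_mul _)
          ((ae_restrict_iff' measurableSet_Ioi).mpr (ae_of_all _ hbound))
    _ ≤ ∫ r in Set.Ioi 0, 2 * C * (r ^ (-γ) * exp (-(a * r))) := by
        refine setIntegral_mono_set (hint.const_mul _) ?_ (Set.Ioi_subset_Ioi hκ).eventuallyLE
        filter_upwards [self_mem_ae_restrict measurableSet_Ioi] with r (hr : 0 < r)
        have := (sectorResolventConst_pos hγ0 hγ1.le hθ0 hθ2).le
        positivity
    _ = 2 * C * ((1 / a) ^ (1 - γ) * Gamma (1 - γ)) := by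
        rw [integral_const_mul, ← integral_rpow_mul_exp_neg_mul_Ioi (by linarith) ha,
          sub_sub_cancel_left]
    _ = _ := by
        rw [one_div, inv_rpow ha.le, ← rpow_neg ha.le, neg_sub, mul_rpow (by linarith) ht.le]
        ring

lemma one_le_rpow_one_sub_mul_rpow_sub_one {γ t T : ℝ} (hγ : γ ≤ 1) (ht : 0 < t) (htT : t ≤ T) :
    1 ≤ T ^ (1 - γ) * t ^ (γ - 1) :=
  calc 1 = t ^ (1 - γ) * t ^ (γ - 1) := by rw [← rpow_add ht]; simp
    _ ≤ T ^ (1 - γ) * t ^ (γ - 1) := by gcongr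

lemma norm_arcIntegral_le {γ σ θ κ t T lam : ℝ} (hγ0 : 0 < γ) (hγ1 : γ ≤ 1) (hσ : 0 ≤ σ)
    (hθ0 : 0 < θ) (hθπ : θ < π) (hκ : 0 < κ) (ht : 0 < t) (htT : t ≤ T) (hlam : 0 ≤ lam) :
    ‖arcIntegral γ σ lam θ κ t‖ ≤
      2 * θ * sectorResolventConst γ θ * κ ^ (1 - γ) * exp (κ * T) * T ^ (1 - γ) *
        t ^ (γ - 1) := by
  have hC := (sectorResolventConst_pos hγ0 hγ1 hθ0 hθπ).le
  have hbound : ∀ ψ ∈ Set.uIoc (-θ) θ,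
      ‖resKer γ σ lam t ((κ : ℂ) * Complex.exp ((ψ : ℂ) * Complex.I)) *
        (Complex.I * (κ : ℂ) * Complex.exp ((ψ : ℂ) * Complex.I))‖ ≤
      sectorResolventConst γ θ * κ ^ (1 - γ) * exp (κ * t) := by
    intro ψ hψ
    rw [Set.uIoc_of_le (by linarith)] at hψ
    have hker := norm_resKer_ofReal_mul_exp_le t hγ0 hγ1 hθ0 hθπ hσ hlam hκ
      (abs_le.mpr ⟨hψ.1.le, hψ.2⟩)
    have hexp : exp (κ * cos ψ * t) ≤ exp (κ * t) := by
      gcongr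
      nlinarith [cos_le_one ψ, mul_pos hκ ht]
    rw [norm_mul, norm_mul, norm_mul, Complex.norm_I, Complex.norm_exp_ofReal_mul_I,
      Complex.norm_real, norm_of_nonneg hκ.le, one_mul, mul_one,
      rpow_sub hκ, rpow_one, div_eq_inv_mul, ← rpow_neg hκ.le]
    calc _ ≤ sectorResolventConst γ θ * (κ ^ (-γ) * exp (κ * t)) * κ := by
          gcongr
          exact hker.trans (by gcongr)
      _ = _ := by ring
  calc _ ≤ sectorResolventConst γ θ * κ ^ (1 - γ) * exp (κ * t) * |θ - -θ| :=
        intervalIntegral.norm_integral_le_of_norm_le_const hbound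
    _ = 2 * θ * sectorResolventConst γ θ * κ ^ (1 - γ) * exp (κ * t) * 1 := by
        rw [sub_neg_eq_add, abs_of_pos (by linarith)]; ring
    _ ≤ 2 * θ * sectorResolventConst γ θ * κ ^ (1 - γ) * exp (κ * T) *
          (T ^ (1 - γ) * t ^ (γ - 1)) := by
        gcongr
        exact one_le_rpow_one_sub_mul_rpow_sub_one hγ1 ht htT
    _ = _ := by ring

theorem Eop_smoothing_bound_general (γ σ θ κ T : ℝ) (hγ : γ ∈ Set.Ioo (0 : ℝ) 1) (hσ : 0 ≤ σ)
    (hθ : θ ∈ Set.Ioo (π / 2) π) (hκ : 0 < κ) :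
    ∃ c > (0 : ℝ), ∀ t ∈ Set.Ioc (0 : ℝ) T, ∀ lam : ℝ, 0 ≤ lam →
      ‖Eop γ σ lam θ κ t‖ ≤ c * t ^ (γ - 1) := by
  obtain ⟨hγ0, hγ1⟩ := hγ
  obtain ⟨hθ1, hθ2⟩ := hθ
  have hθ0 : 0 < θ := by linarith [pi_pos]
  set C := sectorResolventConst γ θ
  set A := 2 * C * (Gamma (1 - γ) * (-cos θ) ^ (γ - 1))
  set B := 2 * θ * C * κ ^ (1 - γ) * exp (κ * T) * T ^ (1 - γ)
  refine ⟨max ((2 * π)⁻¹ * (A + B)) 1, lt_max_of_lt_right one_pos, ?_⟩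
  rintro t ⟨ht0, htT⟩ lam hlam
  have hray := norm_rayIntegral_le hγ0 hγ1 hσ hθ1 hθ2 hκ.le ht0 hlam
  have harc := norm_arcIntegral_le hγ0 hγ1.le hσ hθ0 hθ2 hκ ht0 htT hlam
  calc ‖Eop γ σ lam θ κ t‖
      = (2 * π)⁻¹ * ‖rayIntegral γ σ lam θ κ t + arcIntegral γ σ lam θ κ t‖ := by
        simp [Eop_eq, abs_of_pos pi_pos]
    _ ≤ (2 * π)⁻¹ * (A * t ^ (γ - 1) + B * t ^ (γ - 1)) := by
        gcongr
        exact (norm_add_le _ _).trans (add_le_add hray harc)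
    _ = (2 * π)⁻¹ * (A + B) * t ^ (γ - 1) := by ring
    _ ≤ max ((2 * π)⁻¹ * (A + B)) 1 * t ^ (γ - 1) := by gcongr; exact le_max_left _ _

/-- Scalar smoothing estimate: for γ ∈ (0,1), σ ≥ 0, θ ∈ (π/2,π), κ > 0, T > 0 there is
c > 0 with |E(t)| ≤ c·t^{γ−1} for all t ∈ (0,T] and all λ ≥ 0. -/
theorem Eop_smoothing_bound (γ σ θ κ T : ℝ) (hγ : γ ∈ Set.Ioo (0 : ℝ) 1) (hσ : 0 ≤ σ)
    (hθ : θ ∈ Set.Ioo (π / 2) π) (hκ : 0 < κ) (hT : 0 < T) :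
    ∃ c > (0 : ℝ), ∀ t ∈ Set.Ioc (0 : ℝ) T, ∀ lam : ℝ, 0 ≤ lam →
      ‖Eop γ σ lam θ κ t‖ ≤ c * t ^ (γ - 1) :=
  Eop_smoothing_bound_general γ σ θ κ T hγ hσ hθ hκ
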